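/- arXiv:1205.5358 — 3 statements merged into one kernel-verified Lean document; each statement's English description precedes it below -/
import Mathlib

section
/- Assume (H1), (H2) and (P), and let κ > 0 be large enough that 𝓛_φ(Λ_{κ,δ}) ⊆ Λ_{λ̂·κ,δ} for some λ̂ ∈ (0,1). Then there exist C > 0 and τ ∈ (0,1) such that for every g ∈ Λ_{κ,δ} with ∫ g dν = 1 and every n ≥ 1, ‖λ^{−n}·𝓛_φ^n g − h‖_α ≤ C·τ^n; that is, the normalized iterates converge to the invariant density h exponentially fast in the Hölder norm. -/
/-!
A normalized element `w` of the contracted cone `Λ_{λ̂κ,δ}` satisfies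
`1 ≤ (1 + κ m diam(M)^α) · inf w`, because the local Hölder bound becomes global through `m`.
Hence there is one `t ∈ (0,1)`, independent of `w`, with `w = (1 - t) w' + t h` for a normalized
`w' ∈ Λ_{κ,δ}`: the cone gap `(1 - λ̂) κ` absorbs the Hölder constant and the sup of `t h`.
Since the normalized operator `λ⁻¹ 𝓛_φ` is linear, fixes `h` and maps normalized elements of
`Λ_{κ,δ}` into `Λ_{λ̂κ,δ}`, iterating gives `λ⁻ⁿ 𝓛_φⁿ g - h = (1 - t)ⁿ⁻¹ (w_n - h)` with `w_n`
normalized in `Λ_{λ̂κ,δ}`, and the Hölder norm of `w_n - h` is bounded uniformly in `n`.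
-/

open MeasureTheory Real Set Filter Topology

/-- The Ruelle–Perron–Frobenius transfer operator of `(f, φ)`:
`(𝓛_φ g)(x) = ∑_{f(y)=x} e^{φ(y)} g(y)`. -/
noncomputable def transferOp {M : Type*} (f : M → M) (φ g : M → ℝ) : M → ℝ :=
  fun x => ∑' y : {y : M // f y = x}, Real.exp (φ y.1) * g y.1

/-- `g` satisfies the `(C, α)`-Hölder estimate on pairs of points at distance `< δ`. -/
def HolderOnBalls {M : Type*} [MetricSpace M] (α δ C : ℝ) (g : M → ℝ) : Prop :=
  ∀ x y : M, dist x y < δ → |g x - g y| ≤ C * dist x y ^ α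

/-- `g` satisfies the global `(C, α)`-Hölder estimate. -/
def HolderBound {M : Type*} [MetricSpace M] (α C : ℝ) (g : M → ℝ) : Prop :=
  ∀ x y : M, |g x - g y| ≤ C * dist x y ^ α

/-- Membership in the cone `Λ_{κ,δ}`: `g` is continuous, positive, and its least local
Hölder constant `|g|_{α,δ}` is at most `κ · inf g`, i.e. `g` satisfies the
`(κ · inf g, α)`-Hölder estimate at distances `< δ`. -/
def memCone {M : Type*} [MetricSpace M] (α δ κ : ℝ) (g : M → ℝ) : Prop :=
  Continuous g ∧ (∀ x, 0 < g x) ∧ HolderOnBalls α δ (κ * (⨅ x, g x)) g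

/-- The Hölder norm `‖g‖_α = sup |g| + |g|_α`. -/
noncomputable def holderNorm {M : Type*} [MetricSpace M] (α : ℝ) (g : M → ℝ) : ℝ :=
  (⨆ x, |g x|) + sInf {C : ℝ | 0 ≤ C ∧ HolderBound α C g}


section Holder

variable {M : Type*} [MetricSpace M] {α δ C C' c : ℝ} {u v : M → ℝ}

theorem HolderBound.continuous (hα : 0 < α) (hu : HolderBound α C u) : Continuous u := by
  refine continuous_iff_continuousAt.2 fun x => tendsto_iff_dist_tendsto_zero.2 ?_
  have hdist : Tendsto (fun y => C * dist y x ^ α) (𝓝 x) (𝓝 0) := by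
    have := ((continuous_id.dist (continuous_const (y := x))).rpow_const
      fun _ => Or.inr hα.le).tendsto x |>.const_mul C
    simpa [hα.ne'] using this
  exact squeeze_zero (fun _ => dist_nonneg) (fun y => (Real.dist_eq _ _).trans_le (hu y x)) hdist

theorem HolderBound.mono (hu : HolderBound α C u) (hC : C ≤ C') : HolderBound α C' u :=
  fun x y => (hu x y).trans (by gcongr)

theorem HolderBound.holderOnBalls (hu : HolderBound α C u) : HolderOnBalls α δ C u :=
  fun x y _ => hu x y

theorem HolderBound.sub (hu : HolderBound α C u) (hv : HolderBound α C' v) :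
    HolderBound α (C + C') (u - v) := fun x y =>
  calc |(u - v) x - (u - v) y| ≤ |u x - u y| + |v x - v y| := by
        simpa only [Pi.sub_apply, sub_sub_sub_comm] using abs_sub _ _
    _ ≤ (C + C') * dist x y ^ α := by linarith [hu x y, hv x y]

theorem HolderBound.const_smul (hu : HolderBound α C u) (hc : 0 ≤ c) :
    HolderBound α (c * C) (c • u) := fun x y => by
  simpa only [Pi.smul_apply, smul_eq_mul, ← mul_sub, abs_mul, abs_of_nonneg hc, mul_assoc]
    using mul_le_mul_of_nonneg_left (hu x y) hc

theorem HolderOnBalls.mono (hu : HolderOnBalls α δ C u) (hC : C ≤ C') :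
    HolderOnBalls α δ C' u :=
  fun x y hxy => (hu x y hxy).trans (by gcongr)

theorem HolderOnBalls.sub (hu : HolderOnBalls α δ C u) (hv : HolderOnBalls α δ C' v) :
    HolderOnBalls α δ (C + C') (u - v) := fun x y hxy =>
  calc |(u - v) x - (u - v) y| ≤ |u x - u y| + |v x - v y| := by
        simpa only [Pi.sub_apply, sub_sub_sub_comm] using abs_sub _ _
    _ ≤ (C + C') * dist x y ^ α := by linarith [hu x y hxy, hv x y hxy]

theorem HolderOnBalls.const_smul (hu : HolderOnBalls α δ C u) (hc : 0 ≤ c) :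
    HolderOnBalls α δ (c * C) (c • u) := fun x y hxy => by
  simpa only [Pi.smul_apply, smul_eq_mul, ← mul_sub, abs_mul, abs_of_nonneg hc, mul_assoc]
    using mul_le_mul_of_nonneg_left (hu x y hxy) hc

theorem HolderBound.le_add_mul_diam [CompactSpace M] (hα : 0 ≤ α) (hC : 0 ≤ C)
    (hu : HolderBound α C u) (x y : M) :
    u x ≤ u y + C * Metric.diam (univ : Set M) ^ α := by
  have hxy : dist x y ^ α ≤ Metric.diam (univ : Set M) ^ α := by
    gcongr
    exact Metric.dist_le_diam_of_mem isCompact_univ.isBounded (mem_univ x) (mem_univ y)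
  linarith [le_abs_self (u x - u y), hu x y, mul_le_mul_of_nonneg_left hxy hC]

theorem holderNorm_le [Nonempty M] {S : ℝ} (hS : ∀ x, |u x| ≤ S) (hC : 0 ≤ C)
    (hu : HolderBound α C u) : holderNorm α u ≤ S + C :=
  add_le_add (ciSup_le hS) (csInf_le ⟨0, fun _ hC' => hC'.1⟩ ⟨hC, hu⟩)

end Holder

section Cone

variable {M : Type*} [MetricSpace M] {α δ κ κ' m t b Ch : ℝ} {w h : M → ℝ}

theorem memCone.const_smul {c : ℝ} (hw : memCone α δ κ w) (hc : 0 < c) :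
    memCone α δ κ (c • w) := by
  obtain ⟨hwc, hwpos, hwH⟩ := hw
  refine ⟨continuous_const.mul hwc, fun x => mul_pos hc (hwpos x), ?_⟩
  simpa only [Pi.smul_apply, smul_eq_mul, ← Real.mul_iInf_of_nonneg hc.le, mul_left_comm c κ]
    using hwH.const_smul hc.le

theorem memCone.mono (hw : memCone α δ κ' w) (hκ : κ' ≤ κ) : memCone α δ κ w :=
  ⟨hw.1, hw.2.1, hw.2.2.mono <|
    mul_le_mul_of_nonneg_right hκ (Real.iInf_nonneg fun x => (hw.2.1 x).le)⟩

theorem memCone.sub_smul [CompactSpace M] [Nonempty M] (hw : memCone α δ κ' w) (hκ : 0 ≤ κ)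
    (ht : 0 ≤ t) (hhc : Continuous h) (hhH : HolderBound α Ch h) (hhb : ∀ x, h x ≤ b)
    (htb : t * b < ⨅ x, w x)
    (hκt : κ' * (⨅ x, w x) + t * Ch ≤ κ * ((⨅ x, w x) - t * b)) :
    memCone α δ κ (w - t • h) := by
  obtain ⟨hwc, -, hwH⟩ := hw
  have hbdd := (isCompact_range hwc).bddBelow
  have hlow : ∀ x, (⨅ y, w y) - t * b ≤ (w - t • h) x := fun x => by
    simp only [Pi.sub_apply, Pi.smul_apply, smul_eq_mul]
    linarith [ciInf_le hbdd x, mul_le_mul_of_nonneg_left (hhb x) ht]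
  refine ⟨hwc.sub (continuous_const.mul hhc), fun x => by linarith [hlow x], ?_⟩
  refine (hwH.sub (hhH.const_smul ht).holderOnBalls).mono (hκt.trans ?_)
  exact mul_le_mul_of_nonneg_left (le_ciInf hlow) hκ

theorem memCone.le_mul_iInf [CompactSpace M] (hα : 0 ≤ α) (hm : 0 ≤ m)
    (hmδ : ∀ (C : ℝ) (g : M → ℝ), 0 ≤ C → HolderOnBalls α δ C g → HolderBound α (C * m) g)
    (hκ : 0 ≤ κ) (hw : memCone α δ κ w) (x : M) :
    w x ≤ (1 + κ * m * Metric.diam (univ : Set M) ^ α) * ⨅ y, w y := by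
  have : Nonempty M := ⟨x⟩
  obtain ⟨x₀, hx₀⟩ := (isCompact_range hw.1).sInf_mem (range_nonempty w)
  change w x₀ = ⨅ y, w y at hx₀
  have hι : 0 ≤ ⨅ y, w y := hx₀ ▸ (hw.2.1 x₀).le
  have hCm : 0 ≤ κ * (⨅ y, w y) * m := by positivity
  have := (hmδ _ w (by positivity) hw.2.2).le_add_mul_diam hα hCm x x₀
  rw [hx₀] at this
  linarith

end Cone

theorem exists_pos_lt_one_mul_lt {X Y : ℝ} (hX : 0 ≤ X) (hY : 0 < Y) :
    ∃ t : ℝ, 0 < t ∧ t < 1 ∧ t * X < Y := by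
  obtain ⟨c, hc, hcX⟩ := exists_pos_mul_lt hY X
  refine ⟨min c (1 / 2), by positivity, by linarith [min_le_right c (1 / 2)], ?_⟩
  nlinarith [min_le_left c (1 / 2)]

section NormalizedCone

variable {M : Type*} [MetricSpace M] [MeasurableSpace M] {ν : Measure M}
  {α δ κ κ' m t b Ch : ℝ} {w h : M → ℝ}

def normalizedCone (α δ κ : ℝ) (ν : Measure M) : Set (M → ℝ) :=
  {w | memCone α δ κ w ∧ ∫ x, w x ∂ν = 1}

theorem normalizedCone_mono (hκ : κ' ≤ κ) :
    normalizedCone α δ κ' ν ⊆ normalizedCone α δ κ ν :=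
  fun _ hw => ⟨hw.1.mono hκ, hw.2⟩

variable [CompactSpace M] [BorelSpace M] [IsProbabilityMeasure ν]

theorem Continuous.integrable_of_compactSpace (hw : Continuous w) : Integrable w ν :=
  hw.integrable_of_hasCompactSupport (.of_compactSpace w)

theorem integral_le_of_forall_le {c : ℝ} (hw : Continuous w) (hwc : ∀ x, w x ≤ c) :
    ∫ x, w x ∂ν ≤ c := by
  simpa using integral_mono (hw.integrable_of_compactSpace (ν := ν)) (integrable_const c) hwc

theorem le_integral_of_forall_le {c : ℝ} (hw : Continuous w) (hwc : ∀ x, c ≤ w x) :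
    c ≤ ∫ x, w x ∂ν := by
  simpa using integral_mono (integrable_const c) (hw.integrable_of_compactSpace (ν := ν)) hwc

theorem iInf_le_one_of_mem_normalizedCone (hw : w ∈ normalizedCone α δ κ ν) :
    ⨅ x, w x ≤ 1 :=
  (le_integral_of_forall_le hw.1.1 fun x => ciInf_le (isCompact_range hw.1.1).bddBelow x).trans
    hw.2.le

theorem one_le_mul_iInf_of_mem_normalizedCone (hα : 0 ≤ α) (hm : 0 ≤ m)
    (hmδ : ∀ (C : ℝ) (g : M → ℝ), 0 ≤ C → HolderOnBalls α δ C g → HolderBound α (C * m) g)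
    (hκ : 0 ≤ κ) (hw : w ∈ normalizedCone α δ κ ν) :
    1 ≤ (1 + κ * m * Metric.diam (univ : Set M) ^ α) * ⨅ x, w x :=
  hw.2.symm.le.trans (integral_le_of_forall_le hw.1.1 (hw.1.le_mul_iInf hα hm hmδ hκ))

theorem exists_mem_normalizedCone_eq_smul_add_smul (hα : 0 ≤ α) (hm : 0 ≤ m)
    (hmδ : ∀ (C : ℝ) (g : M → ℝ), 0 ≤ C → HolderOnBalls α δ C g → HolderBound α (C * m) g)
    (hκ' : 0 ≤ κ') (hκ'κ : κ' ≤ κ) (hw : w ∈ normalizedCone α δ κ' ν) (hhc : Continuous h)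
    (hCh : 0 ≤ Ch) (hhH : HolderBound α Ch h) (hb : 0 ≤ b) (hhb : ∀ x, h x ≤ b)
    (hhint : ∫ x, h x ∂ν = 1) (ht0 : 0 < t) (ht1 : t < 1)
    (ht : t * ((Ch + κ * b) * (1 + κ * m * Metric.diam (univ : Set M) ^ α)) < κ - κ') :
    ∃ w' ∈ normalizedCone α δ κ ν, w = (1 - t) • w' + t • h := by
  have := nonempty_of_isProbabilityMeasure ν
  set ι := ⨅ x, w x
  set K := κ * m * Metric.diam (univ : Set M) ^ α
  have hκ : 0 ≤ κ := hκ'.trans hκ'κ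
  have hι1 : 1 ≤ (1 + K) * ι :=
    one_le_mul_iInf_of_mem_normalizedCone hα hm hmδ hκ (normalizedCone_mono hκ'κ hw)
  have hι : 0 < ι := pos_of_mul_pos_right (one_pos.trans_le hι1) (by positivity)
  have hkey : t * (Ch + κ * b) < (κ - κ') * ι :=
    calc t * (Ch + κ * b) ≤ t * (Ch + κ * b) * ((1 + K) * ι) :=
          le_mul_of_one_le_right (by positivity) hι1
      _ = t * ((Ch + κ * b) * (1 + K)) * ι := by ring
      _ < (κ - κ') * ι := mul_lt_mul_of_pos_right ht hι
  have htb : t * b < ι := by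
    refine lt_of_mul_lt_mul_left ?_ hκ
    nlinarith [mul_nonneg ht0.le hCh, mul_nonneg hκ' hι.le]
  have hκt : κ' * ι + t * Ch ≤ κ * (ι - t * b) := by linarith
  have h1t : 0 < 1 - t := sub_pos.2 ht1
  refine ⟨(1 - t)⁻¹ • (w - t • h),
    ⟨(hw.1.sub_smul hκ ht0.le hhc hhH hhb htb hκt).const_smul (inv_pos.2 h1t), ?_⟩, ?_⟩
  · simp only [Pi.smul_apply, Pi.sub_apply, smul_eq_mul]
    rw [integral_const_mul, integral_sub hw.1.1.integrable_of_compactSpace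
      (hhc.integrable_of_compactSpace.const_mul t), integral_const_mul, hw.2, hhint]
    field_simp
  · ext x
    simp only [Pi.add_apply, Pi.smul_apply, Pi.sub_apply, smul_eq_mul]
    field_simp
    ring

theorem exists_forall_mem_normalizedCone_eq_smul_add_smul (hα : 0 ≤ α) (hm : 0 ≤ m)
    (hmδ : ∀ (C : ℝ) (g : M → ℝ), 0 ≤ C → HolderOnBalls α δ C g → HolderBound α (C * m) g)
    (hκ' : 0 ≤ κ') (hκ'κ : κ' < κ) (hhc : Continuous h) (hCh : 0 ≤ Ch)
    (hhH : HolderBound α Ch h) (hb : 0 ≤ b) (hhb : ∀ x, h x ≤ b) (hhint : ∫ x, h x ∂ν = 1) :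
    ∃ t : ℝ, 0 < t ∧ t < 1 ∧ ∀ w ∈ normalizedCone α δ κ' ν,
      ∃ w' ∈ normalizedCone α δ κ ν, w = (1 - t) • w' + t • h := by
  obtain ⟨t, ht0, ht1, ht⟩ := exists_pos_lt_one_mul_lt
    (X := (Ch + κ * b) * (1 + κ * m * Metric.diam (univ : Set M) ^ α))
    (by have := hκ'.trans hκ'κ.le; positivity) (sub_pos.2 hκ'κ)
  exact ⟨t, ht0, ht1, fun w hw => exists_mem_normalizedCone_eq_smul_add_smul hα hm hmδ hκ'
    hκ'κ.le hw hhc hCh hhH hb hhb hhint ht0 ht1 ht⟩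

theorem holderNorm_smul_sub_le (hα : 0 ≤ α) (hm : 0 ≤ m)
    (hmδ : ∀ (C : ℝ) (g : M → ℝ), 0 ≤ C → HolderOnBalls α δ C g → HolderBound α (C * m) g)
    (hκ : 0 ≤ κ) (hw : w ∈ normalizedCone α δ κ ν) (hCh : 0 ≤ Ch) (hhH : HolderBound α Ch h)
    (hhb : ∀ x, |h x| ≤ b) {s : ℝ} (hs : 0 ≤ s) :
    holderNorm α (s • (w - h)) ≤
      s * (1 + κ * m * Metric.diam (univ : Set M) ^ α + b + (κ * m + Ch)) := by
  have := nonempty_of_isProbabilityMeasure ν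
  have hι1 := iInf_le_one_of_mem_normalizedCone hw
  have hι : 0 ≤ ⨅ x, w x := Real.iInf_nonneg fun x => (hw.1.2.1 x).le
  have hsup : ∀ x, |(s • (w - h)) x| ≤ s * (1 + κ * m * Metric.diam (univ : Set M) ^ α + b) := by
    intro x
    have hwx := hw.1.le_mul_iInf hα hm hmδ hκ x
    have hK : 0 ≤ κ * m * Metric.diam (univ : Set M) ^ α := by positivity
    simp only [Pi.smul_apply, Pi.sub_apply, smul_eq_mul, abs_mul, abs_of_nonneg hs]
    refine mul_le_mul_of_nonneg_left ((abs_sub _ _).trans ?_) hs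
    rw [abs_of_pos (hw.1.2.1 x)]
    nlinarith [hhb x]
  have hwH : HolderBound α (κ * m) w :=
    (hmδ _ w (by positivity) hw.1.2.2).mono (by nlinarith [mul_nonneg hκ hm])
  refine (holderNorm_le hsup (by positivity) ((hwH.sub hhH).const_smul hs)).trans_eq ?_
  ring

end NormalizedCone

section TransferOperator

variable {M : Type*} (f : M → M) (φ : M → ℝ) [∀ x, Finite {y : M // f y = x}]

-- Finite fibres are what make `transferOp` additive: `tsum` of a non-summable family is `0`.
noncomputable def transferLinearMap : (M → ℝ) →ₗ[ℝ] (M → ℝ) where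
  toFun := transferOp f φ
  map_add' u v := funext fun x => by
    simp only [transferOp, Pi.add_apply, mul_add]
    exact Summable.tsum_add .of_finite .of_finite
  map_smul' c u := funext fun x => by
    simp only [transferOp, Pi.smul_apply, smul_eq_mul, RingHom.id_apply, mul_left_comm _ c]
    exact tsum_mul_left

theorem iterate_smul_transferLinearMap (c : ℝ) (g : M → ℝ) (n : ℕ) :
    (⇑(c • transferLinearMap f φ))^[n] g = c ^ n • (transferOp f φ)^[n] g := by
  rw [← Module.End.pow_apply, smul_pow, LinearMap.smul_apply, Module.End.pow_apply]
  rfl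

variable {f φ} {lam : ℝ}

theorem smul_transferLinearMap_apply_eq_self {h : M → ℝ} (hlam : lam ≠ 0)
    (hhfix : ∀ x, transferOp f φ h x = lam * h x) : (lam⁻¹ • transferLinearMap f φ) h = h :=
  funext fun x => by simp [transferLinearMap, hhfix, hlam]

theorem mapsTo_smul_transferLinearMap_normalizedCone [MetricSpace M] [MeasurableSpace M]
    {ν : Measure M} {α δ κ κ' : ℝ} (hlam : 0 < lam)
    (hconf : ∀ g : M → ℝ, Continuous g → ∫ x, transferOp f φ g x ∂ν = lam * ∫ x, g x ∂ν)
    (hcone : ∀ g : M → ℝ, memCone α δ κ g → memCone α δ κ' (transferOp f φ g)) :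
    MapsTo (lam⁻¹ • transferLinearMap f φ) (normalizedCone α δ κ ν) (normalizedCone α δ κ' ν) :=
  fun g hg => ⟨(hcone g hg.1).const_smul (inv_pos.2 hlam),
    by simp [transferLinearMap, integral_const_mul, hconf g hg.1.1, hg.2, hlam.ne']⟩

end TransferOperator

theorem Module.End.exists_iterate_sub_eq_pow_smul {R E : Type*} [CommRing R] [AddCommGroup E]
    [Module R E] (P : Module.End R E) {h : E} (hPh : P h = h) {S S' : Set E} {t : R}
    (hP : MapsTo P S' S) (hdec : ∀ w ∈ S, ∃ w' ∈ S', w = (1 - t) • w' + t • h)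
    {g : E} (hg : g ∈ S') (n : ℕ) :
    ∃ w ∈ S, P^[n + 1] g - h = (1 - t) ^ n • (w - h) := by
  induction n with
  | zero => exact ⟨P g, hP hg, by simp⟩
  | succ n ih =>
    obtain ⟨w, hw, hrec⟩ := ih
    obtain ⟨w', hw', rfl⟩ := hdec w hw
    refine ⟨P w', hP hw', ?_⟩
    have hn : P^[n + 1] g = h + (1 - t) ^ n • ((1 - t) • w' + t • h - h) := by
      rw [← hrec]; abel
    rw [Function.iterate_succ_apply', hn]
    simp only [map_add, map_sub, map_smul, hPh]
    module

theorem exponential_convergence_to_density_general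
    {M : Type*} [MetricSpace M] [CompactSpace M]
    [MeasurableSpace M] [BorelSpace M]
    -- `f` is a local homeomorphism with `L(x)`-Lipschitz local inverses,
    -- every point having exactly `deg` preimages
    (f : M → M)
    (deg q : ℕ) (hdeg : ∀ x : M, Nat.card {y : M // f y = x} = deg)
    (hq : q < deg)
    (α : ℝ) (hα0 : 0 < α)
    (δ : ℝ)
    -- `m`: local-to-global Hölder constant
    (m : ℝ) (hm : 1 ≤ m)
    (hmδ : ∀ (C : ℝ) (g : M → ℝ), 0 ≤ C → HolderOnBalls α δ C g → HolderBound α (C * m) g)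
    (φ : M → ℝ)
    -- the conformal measure `ν` with `𝓛_φ^* ν = λ ν`
    (lam : ℝ) (hlam : 0 < lam)
    (ν : Measure M) [IsProbabilityMeasure ν]
    (hconf : ∀ g : M → ℝ, Continuous g →
      ∫ x, transferOp f φ g x ∂ν = lam * ∫ x, g x ∂ν)
    -- the invariant density `h`
    (h : M → ℝ) (hhH : ∃ C, 0 ≤ C ∧ HolderBound α C h)
    (hhfix : ∀ x, transferOp f φ h x = lam * h x)
    (hhint : ∫ x, h x ∂ν = 1)
    (κ : ℝ) (hκ0 : 0 < κ)
    (hκ : ∃ lamhat : ℝ, 0 < lamhat ∧ lamhat < 1 ∧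
      ∀ g : M → ℝ, memCone α δ κ g → memCone α δ (lamhat * κ) (transferOp f φ g)) :
    ∃ C τ : ℝ, 0 < C ∧ 0 < τ ∧ τ < 1 ∧
      ∀ g : M → ℝ, memCone α δ κ g → ∫ x, g x ∂ν = 1 →
        ∀ n : ℕ, 1 ≤ n →
          holderNorm α (fun x => (lam ^ n)⁻¹ * (transferOp f φ)^[n] g x - h x) ≤
            C * τ ^ n := by
  obtain ⟨lamhat, hl0, hl1, hcone⟩ := hκ
  obtain ⟨Ch, hCh, hhH⟩ := hhH
  have := nonempty_of_isProbabilityMeasure ν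
  have : ∀ x, Finite {y : M // f y = x} := fun x =>
    Nat.finite_of_card_ne_zero (by rw [hdeg x]; omega)
  have hhc := hhH.continuous hα0
  obtain ⟨b, hb⟩ := isCompact_univ.exists_bound_of_continuousOn hhc.continuousOn
  replace hb : ∀ x, |h x| ≤ b := fun x => hb x (mem_univ x)
  have hb0 : 0 ≤ b := (abs_nonneg _).trans (hb (Classical.arbitrary M))
  have hm0 : 0 ≤ m := by linarith
  have hκ' : lamhat * κ < κ := mul_lt_of_lt_one_left hκ0 hl1
  obtain ⟨t, ht0, ht1, hdec⟩ := exists_forall_mem_normalizedCone_eq_smul_add_smul hα0.le hm0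
    hmδ (by positivity) hκ' hhc hCh hhH hb0 (fun x => (le_abs_self _).trans (hb x)) hhint
  set K := κ * m * Metric.diam (univ : Set M) ^ α
  have h1t : 0 < 1 - t := by linarith
  refine ⟨(1 + K + b + (κ * m + Ch)) / (1 - t), 1 - t, by positivity, by linarith, by linarith, ?_⟩
  intro g hg hgint n hn
  obtain ⟨n, rfl⟩ := Nat.exists_eq_add_of_le' hn
  obtain ⟨w, hw, hrec⟩ := Module.End.exists_iterate_sub_eq_pow_smul _
    (smul_transferLinearMap_apply_eq_self hlam.ne' hhfix)
    (mapsTo_smul_transferLinearMap_normalizedCone hlam hconf hcone) hdec ⟨hg, hgint⟩ n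
  have hfun : (fun x => (lam ^ (n + 1))⁻¹ * (transferOp f φ)^[n + 1] g x - h x) =
      (1 - t) ^ n • (w - h) := by
    rw [← hrec, iterate_smul_transferLinearMap, inv_pow]
    rfl
  rw [hfun]
  calc _ ≤ (1 - t) ^ n * (1 + K + b + (κ * m + Ch)) :=
        holderNorm_smul_sub_le hα0.le hm0 hmδ hκ0.le (normalizedCone_mono hκ'.le hw) hCh
          hhH hb (by positivity)
    _ = _ := by rw [pow_succ]; field_simp

/-- Corollary (exponential convergence to the density): if `κ > 0` is large enough that
`𝓛_φ(Λ_{κ,δ}) ⊆ Λ_{λ̂κ,δ}` for some `λ̂ ∈ (0,1)`, then there are `C > 0`, `τ ∈ (0,1)` with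
`‖λ^{-n} 𝓛_φ^n g - h‖_α ≤ C τⁿ` for every `g ∈ Λ_{κ,δ}` with `∫ g dν = 1` and `n ≥ 1`. -/
theorem exponential_convergence_to_density
    {M : Type*} [MetricSpace M] [CompactSpace M] [ConnectedSpace M]
    [MeasurableSpace M] [BorelSpace M]
    -- `f` is a local homeomorphism with `L(x)`-Lipschitz local inverses,
    -- every point having exactly `deg` preimages
    (f : M → M) (hfc : Continuous f)
    (Lc : M → ℝ) (hLc : Continuous Lc)
    (hloc : ∀ x : M, ∃ U : Set M, IsOpen U ∧ x ∈ U ∧ Set.InjOn f U ∧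
      IsOpen (f '' U) ∧ ∀ y ∈ U, ∀ z ∈ U, dist y z ≤ Lc x * dist (f y) (f z))
    (deg q : ℕ) (hdeg : ∀ x : M, Nat.card {y : M // f y = x} = deg)
    -- (H1)
    (σ L : ℝ) (hσ : 1 < σ) (hL : 1 ≤ L)
    (A : Set M) (hA : IsOpen A)
    (hH1 : ∀ x : M, (x ∈ A → Lc x ≤ L) ∧ (x ∉ A → Lc x ≤ σ⁻¹))
    -- (H2)
    (hH2 : ∃ 𝒰 : Finset (Set M), (∀ U ∈ 𝒰, IsOpen U ∧ Set.InjOn f U) ∧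
      (⋃ U ∈ 𝒰, U) = Set.univ ∧ ∃ 𝒰' ⊆ 𝒰, 𝒰'.card = q ∧ A ⊆ ⋃ U ∈ 𝒰', U)
    (hq : q < deg)
    (α : ℝ) (hα0 : 0 < α) (hα1 : α ≤ 1)
    -- `δ`: every ball of radius `δ` has at most `q` connected components of its
    -- `f`-preimage meeting `A`
    (δ : ℝ) (hδ0 : 0 < δ)
    (hδA : ∀ x : M,
      {C : Set M | (∃ y ∈ f ⁻¹' Metric.ball x δ,
          C = connectedComponentIn (f ⁻¹' Metric.ball x δ) y) ∧ (C ∩ A).Nonempty}.Finite ∧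
      {C : Set M | (∃ y ∈ f ⁻¹' Metric.ball x δ,
          C = connectedComponentIn (f ⁻¹' Metric.ball x δ) y) ∧ (C ∩ A).Nonempty}.ncard ≤ q)
    -- `m`: local-to-global Hölder constant
    (m : ℝ) (hm : 1 ≤ m)
    (hmδ : ∀ (C : ℝ) (g : M → ℝ), 0 ≤ C → HolderOnBalls α δ C g → HolderBound α (C * m) g)
    -- (P)
    (φ : M → ℝ) (hφH : ∃ C, 0 ≤ C ∧ HolderBound α C φ)
    (εφ : ℝ) (hεφ0 : 0 < εφ) (hεφq : εφ < Real.log deg - Real.log q)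
    (hεφ : Real.exp εφ *
        ((((deg : ℝ) - q) * σ ^ (-α) + q * L ^ α * (1 + (L - 1) ^ α)) / deg) +
        2 * εφ * m * L ^ α * Metric.diam (Set.univ : Set M) ^ α < 1)
    (hP1 : (⨆ x, φ x) - (⨅ x, φ x) < εφ)
    (hP2 : ∃ C, 0 ≤ C ∧ C < εφ * Real.exp (⨅ x, φ x) ∧
      HolderBound α C (fun x => Real.exp (φ x)))
    -- the conformal measure `ν` with `𝓛_φ^* ν = λ ν`
    (lam : ℝ) (hlam : 0 < lam)
    (ν : Measure M) [IsProbabilityMeasure ν]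
    (hconf : ∀ g : M → ℝ, Continuous g →
      ∫ x, transferOp f φ g x ∂ν = lam * ∫ x, g x ∂ν)
    -- the invariant density `h`
    (h : M → ℝ) (hhH : ∃ C, 0 ≤ C ∧ HolderBound α C h)
    (hhfix : ∀ x, transferOp f φ h x = lam * h x)
    (hhint : ∫ x, h x ∂ν = 1)
    (hhpos : ∃ a b : ℝ, 0 < a ∧ ∀ x, a ≤ h x ∧ h x ≤ b)
    (κ : ℝ) (hκ0 : 0 < κ)
    (hκ : ∃ lamhat : ℝ, 0 < lamhat ∧ lamhat < 1 ∧
      ∀ g : M → ℝ, memCone α δ κ g → memCone α δ (lamhat * κ) (transferOp f φ g)) :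
    ∃ C τ : ℝ, 0 < C ∧ 0 < τ ∧ τ < 1 ∧
      ∀ g : M → ℝ, memCone α δ κ g → ∫ x, g x ∂ν = 1 →
        ∀ n : ℕ, 1 ≤ n →
          holderNorm α (fun x => (lam ^ n)⁻¹ * (transferOp f φ)^[n] g x - h x) ≤
            C * τ ^ n :=
  exponential_convergence_to_density_general f deg q hdeg hq α hα0 δ m hm hmδ φ lam hlam ν hconf h
    hhH hhfix hhint κ hκ0 hκ
end

section
/- Let M be a metric space such that for all y, z ∈ M and every 0 < t < d(y,z) there exists w ∈ M with d(z,w) = t and d(y,w) = d(y,z) − t (as holds for the geodesic distance on a compact connected Riemannian manifold). Let α ∈ (0,1], δ > 0, C ≥ 0 and 0 < r ≤ 1. If φ : M → ℝ satisfies |φ(x) − φ(y)| ≤ C·d(x,y)^α for all x, y with d(x,y) ≤ δ, then |φ(x) − φ(y)| ≤ C·(1 + r^α)·d(x,y)^α for all x, y with d(x,y) ≤ (1+r)·δ. -/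
/-!
Split a segment `[x, y]` of length `d ≤ (1 + r) δ` at a point `w` with `d(x, w) = d / (1 + r)`
and `d(w, y) = r d / (1 + r)`; both pieces have length at most `δ` because `r ≤ 1`.
Applying the local bound on each piece gives
`|φ x - φ y| ≤ C (1 + r^α) (d / (1 + r))^α ≤ C (1 + r^α) d^α`.
-/

open Real

section

variable {M : Type*} [PseudoMetricSpace M]

def HolderInBalls (C α δ : ℝ) (φ : M → ℝ) : Prop :=
  ∀ x y : M, dist x y ≤ δ → |φ x - φ y| ≤ C * dist x y ^ α

theorem HolderInBalls.abs_sub_le_add {C α δ : ℝ} {φ : M → ℝ} (hφ : HolderInBalls C α δ φ)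
    {x w y : M} (hxw : dist x w ≤ δ) (hwy : dist w y ≤ δ) :
    |φ x - φ y| ≤ C * (dist x w ^ α + dist w y ^ α) :=
  calc |φ x - φ y| ≤ |φ x - φ w| + |φ w - φ y| := abs_sub_le _ _ _
    _ ≤ C * dist x w ^ α + C * dist w y ^ α := add_le_add (hφ x w hxw) (hφ w y hwy)
    _ = C * (dist x w ^ α + dist w y ^ α) := by ring

theorem exists_dist_eq_div_one_add
    (hgeo : ∀ y z : M, ∀ t : ℝ, 0 < t → t < dist y z →
      ∃ w : M, dist z w = t ∧ dist y w = dist y z - t)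
    {r : ℝ} (hr : 0 ≤ r) (x y : M) :
    ∃ w : M, dist x w = dist x y / (1 + r) ∧ dist w y = r * dist x y / (1 + r) := by
  have h1r : 0 < 1 + r := by linarith
  rcases hr.eq_or_lt with rfl | hr
  · exact ⟨y, by simp, by simp⟩
  rcases (dist_nonneg (x := x) (y := y)).eq_or_lt with hd | hd
  · exact ⟨x, by simp [← hd], by simp [← hd]⟩
  have ht : r * dist x y / (1 + r) < dist x y := by
    rw [div_lt_iff₀ h1r]; nlinarith
  obtain ⟨w, hyw, hxw⟩ := hgeo x y _ (by positivity) ht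
  refine ⟨w, ?_, by rw [dist_comm, hyw]⟩
  rw [hxw]
  field_simp
  ring

end

theorem rpow_div_one_add_add_rpow_le {d r α : ℝ} (hd : 0 ≤ d) (hr : 0 ≤ r) (hα : 0 ≤ α) :
    (d / (1 + r)) ^ α + (r * d / (1 + r)) ^ α ≤ (1 + r ^ α) * d ^ α := by
  have hsplit : (r * d / (1 + r)) ^ α = r ^ α * (d / (1 + r)) ^ α := by
    rw [mul_div_assoc, mul_rpow hr (by positivity)]
  have hshrink : (d / (1 + r)) ^ α ≤ d ^ α :=
    rpow_le_rpow (by positivity) (div_le_self hd (by linarith)) hα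
  calc (d / (1 + r)) ^ α + (r * d / (1 + r)) ^ α = (1 + r ^ α) * (d / (1 + r)) ^ α := by
        rw [hsplit]; ring
    _ ≤ (1 + r ^ α) * d ^ α := by gcongr

theorem holder_on_larger_balls_general
    {M : Type*} [MetricSpace M]
    (hgeo : ∀ y z : M, ∀ t : ℝ, 0 < t → t < dist y z →
      ∃ w : M, dist z w = t ∧ dist y w = dist y z - t)
    (α δ C r : ℝ) (hα0 : 0 < α) (hC : 0 ≤ C)
    (hr0 : 0 < r) (hr1 : r ≤ 1)
    (φ : M → ℝ)
    (hφ : ∀ x y : M, dist x y ≤ δ → |φ x - φ y| ≤ C * dist x y ^ α) :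
    ∀ x y : M, dist x y ≤ (1 + r) * δ →
      |φ x - φ y| ≤ C * (1 + r ^ α) * dist x y ^ α := by
  intro x y hxy
  have h1r : 0 < 1 + r := by linarith
  obtain ⟨w, hxw, hwy⟩ := exists_dist_eq_div_one_add hgeo hr0.le x y
  have hxw_le : dist x w ≤ δ := by
    rw [hxw, div_le_iff₀ h1r, mul_comm]; exact hxy
  have hwy_le : dist w y ≤ δ := by
    rw [hwy, div_le_iff₀ h1r]; nlinarith [dist_nonneg (x := x) (y := y)]
  calc |φ x - φ y| ≤ C * (dist x w ^ α + dist w y ^ α) :=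
        HolderInBalls.abs_sub_le_add hφ hxw_le hwy_le
    _ ≤ C * ((1 + r ^ α) * dist x y ^ α) := by
        rw [hxw, hwy]; gcongr; exact rpow_div_one_add_add_rpow_le dist_nonneg hr0.le hα0.le
    _ = C * (1 + r ^ α) * dist x y ^ α := by ring

/-- Lemma (extending local Hölder bounds): in a metric space where geodesic-like
intermediate points exist, a `(C,α)`-Hölder bound on balls of radius `δ` yields a
`(C(1+r^α),α)`-Hölder bound on balls of radius `(1+r)δ`, for `0 < r ≤ 1`. -/
theorem holder_on_larger_balls
    {M : Type*} [MetricSpace M]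
    (hgeo : ∀ y z : M, ∀ t : ℝ, 0 < t → t < dist y z →
      ∃ w : M, dist z w = t ∧ dist y w = dist y z - t)
    (α δ C r : ℝ) (hα0 : 0 < α) (hα1 : α ≤ 1) (hδ0 : 0 < δ) (hC : 0 ≤ C)
    (hr0 : 0 < r) (hr1 : r ≤ 1)
    (φ : M → ℝ)
    (hφ : ∀ x y : M, dist x y ≤ δ → |φ x - φ y| ≤ C * dist x y ^ α) :
    ∀ x y : M, dist x y ≤ (1 + r) * δ →
      |φ x - φ y| ≤ C * (1 + r ^ α) * dist x y ^ α :=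
  holder_on_larger_balls_general hgeo α δ C r hα0 hC hr0 hr1 φ hφ
end

section
/- Let φ : S¹ → ℝ be any Lipschitz function such that φ(x) = |x| for all x with |x| ≤ 1/8 and φ(x) = 0 for all x with 1/5 ≤ |x| ≤ 1/2 (such φ exists with Lip(φ) = 1). Then for every n ≥ 1 the Lipschitz seminorm of 𝓛_{f_n}φ − 𝓛_f φ satisfies Lip(𝓛_{f_n}φ − 𝓛_f φ) ≥ 1. In particular the operators 𝓛_{f_n} do not converge to 𝓛_f, even in the strong operator topology, on the space of Lipschitz functions on S¹, although f_n → f in the C^∞ topology. -/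
/-- The Ruelle–Perron–Frobenius operator with potential `0` of a map `g` on the circle
`S¹ = ℝ/ℤ`: `(𝓛_g φ)(x) = ∑_{g(y)=x} φ(y)`. -/
noncomputable def transfer0 (g : AddCircle (1 : ℝ) → AddCircle (1 : ℝ))
    (φ : AddCircle (1 : ℝ) → ℝ) (x : AddCircle (1 : ℝ)) : ℝ :=
  ∑' y : {y : AddCircle (1 : ℝ) // g y = x}, φ y.1

/-!
Write `t = 1/(10n)`, so that `f_n z = 2z + 2t`. The preimages of `v` are `v/2, v/2 + 1/2` under `f`
and `(v - 2t)/2, (v - 2t)/2 + 1/2` under `f_n`; for `v ∈ {0, t}` those near `1/2` lie where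
`φ = 0` and those near `0` where `φ = |·|`. Hence `(𝓛_{f_n} φ - 𝓛_f φ)(0) = φ(-t) - φ(0) = t`,
while at `t` the difference is `φ(-t/2) - φ(t/2) = 0`. As `d(0, t) = t`, the Lipschitz constant
of the difference is at least `1`, however small `t` is.
-/

namespace AddCircle

theorem add_self_eq_coe_iff {p : ℝ} (v : ℝ) (y : AddCircle p) :
    y + y = v ↔ y = ↑(v / 2) ∨ y = ↑(v / 2 + p / 2) := by
  rw [show (v : AddCircle p) = ↑(v / 2) + ↑(v / 2) by rw [← coe_add, add_halves], ← two_nsmul,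
    ← two_nsmul, QuotientAddGroup.zmultiples_nsmul_eq_nsmul_iff two_ne_zero, Fin.exists_fin_two]
  simp

theorem coe_half_period_ne_zero {p : ℝ} (hp : p ≠ 0) : ((p / 2 : ℝ) : AddCircle p) ≠ 0 := by
  rw [Ne, coe_eq_zero_iff]
  rintro ⟨n, hn⟩
  rw [zsmul_eq_mul] at hn
  have h2 : (2 * n : ℤ) = 1 := by
    exact_mod_cast mul_right_cancel₀ hp (by linarith : (2 * n : ℝ) * p = 1 * p)
  omega

end AddCircle

namespace UnitAddCircle

theorem norm_coe_eq_abs {r : ℝ} (hr : |r| ≤ 1 / 2) : ‖(r : UnitAddCircle)‖ = |r| :=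
  (AddCircle.norm_coe_eq_abs_iff 1 one_ne_zero).2 (by simpa using hr)

theorem le_norm_coe_of_le_of_le_one_sub {a r : ℝ} (ha : a ≤ r) (hr : r ≤ 1 - a) :
    a ≤ ‖(r : UnitAddCircle)‖ := by
  rw [UnitAddCircle.norm_eq]
  rcases le_or_gt (round r) 0 with h | h
  · have : (round r : ℝ) ≤ 0 := by exact_mod_cast h
    exact le_abs.2 (Or.inl (by linarith))
  · have : (1 : ℝ) ≤ round r := by exact_mod_cast h
    exact le_abs.2 (Or.inr (by linarith))

end UnitAddCircle

theorem transfer0_eq_sum {g : UnitAddCircle → UnitAddCircle} {x : UnitAddCircle}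
    (s : Finset UnitAddCircle) (hs : ∀ y, y ∈ s ↔ g y = x) (φ : UnitAddCircle → ℝ) :
    transfer0 g φ x = ∑ y ∈ s, φ y := by
  rw [transfer0, ← Finset.tsum_subtype]
  exact ((Equiv.subtypeEquivRight hs).tsum_eq (fun y => φ y.1)).symm

theorem transfer0_add_const (g : UnitAddCircle → UnitAddCircle) (c : UnitAddCircle)
    (φ : UnitAddCircle → ℝ) (x : UnitAddCircle) :
    transfer0 (fun z => g z + c) φ x = transfer0 g φ (x - c) :=
  (Equiv.subtypeEquivRight fun _ => eq_sub_iff_add_eq.symm).tsum_eq (fun y => φ y.1)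

theorem transfer0_add_self_coe (φ : UnitAddCircle → ℝ) (v : ℝ) :
    transfer0 (fun z => z + z) φ v = φ ↑(v / 2) + φ ↑(v / 2 + 1 / 2) := by
  classical
  have hne : (↑(v / 2) : UnitAddCircle) ≠ ↑(v / 2 + 1 / 2) := by
    rw [Ne, ← sub_eq_zero, ← AddCircle.coe_sub, sub_add_cancel_left, AddCircle.coe_neg, neg_eq_zero]
    exact AddCircle.coe_half_period_ne_zero one_ne_zero
  rw [transfer0_eq_sum {↑(v / 2), ↑(v / 2 + 1 / 2)}, Finset.sum_pair hne]
  intro y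
  simp [AddCircle.add_self_eq_coe_iff]

theorem apply_coe_of_abs_le {φ : UnitAddCircle → ℝ}
    (hφ : ∀ x : UnitAddCircle, ‖x‖ ≤ 1 / 8 → φ x = ‖x‖) {r : ℝ} (hr : |r| ≤ 1 / 8) :
    φ r = |r| := by
  rw [← UnitAddCircle.norm_coe_eq_abs (by linarith)]
  exact hφ _ (by rwa [UnitAddCircle.norm_coe_eq_abs (by linarith)])

theorem apply_coe_eq_zero {φ : UnitAddCircle → ℝ}
    (hφ : ∀ x : UnitAddCircle, 1 / 5 ≤ ‖x‖ → φ x = 0) {r : ℝ} (h₁ : 1 / 5 ≤ r) (h₂ : r ≤ 4 / 5) :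
    φ r = 0 :=
  hφ _ (UnitAddCircle.le_norm_coe_of_le_of_le_one_sub h₁ (by linarith))

section

variable {φ : UnitAddCircle → ℝ} {t : ℝ}

theorem transfer0_shift_sub_transfer0_at_zero (hφ1 : ∀ x : UnitAddCircle, ‖x‖ ≤ 1 / 8 → φ x = ‖x‖)
    (hφ2 : ∀ x : UnitAddCircle, 1 / 5 ≤ ‖x‖ → φ x = 0) (ht₀ : 0 ≤ t) (ht₁ : t ≤ 1 / 10) :
    transfer0 (fun z => z + z + ↑(2 * t)) φ ↑(0 : ℝ) - transfer0 (fun z => z + z) φ ↑(0 : ℝ) = t := by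
  rw [transfer0_add_const, ← AddCircle.coe_sub, transfer0_add_self_coe, transfer0_add_self_coe,
    apply_coe_of_abs_le hφ1 (abs_le.2 ⟨by linarith, by linarith⟩),
    apply_coe_eq_zero hφ2 (by linarith) (by linarith), apply_coe_of_abs_le hφ1 (by norm_num),
    apply_coe_eq_zero hφ2 (by norm_num) (by norm_num), abs_of_nonpos (by linarith), zero_div,
    abs_zero]
  ring

theorem transfer0_shift_sub_transfer0_at_self (hφ1 : ∀ x : UnitAddCircle, ‖x‖ ≤ 1 / 8 → φ x = ‖x‖)
    (hφ2 : ∀ x : UnitAddCircle, 1 / 5 ≤ ‖x‖ → φ x = 0) (ht₀ : 0 ≤ t) (ht₁ : t ≤ 1 / 10) :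
    transfer0 (fun z => z + z + ↑(2 * t)) φ ↑t - transfer0 (fun z => z + z) φ ↑t = 0 := by
  rw [transfer0_add_const, ← AddCircle.coe_sub, transfer0_add_self_coe, transfer0_add_self_coe,
    apply_coe_of_abs_le hφ1 (abs_le.2 ⟨by linarith, by linarith⟩),
    apply_coe_eq_zero hφ2 (by linarith) (by linarith),
    apply_coe_of_abs_le hφ1 (abs_le.2 ⟨by linarith, by linarith⟩),
    apply_coe_eq_zero hφ2 (by linarith) (by linarith), abs_of_nonpos (by linarith),
    abs_of_nonneg (by linarith)]
  ring

end

theorem transfer_operator_not_continuous_general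
    (φ : AddCircle (1 : ℝ) → ℝ)
    (hφ1 : ∀ x : AddCircle (1 : ℝ), ‖x‖ ≤ 1 / 8 → φ x = ‖x‖)
    (hφ2 : ∀ x : AddCircle (1 : ℝ), 1 / 5 ≤ ‖x‖ → φ x = 0) :
    ∀ n : ℕ, 1 ≤ n → ∀ K' : ℝ,
      (∀ x y : AddCircle (1 : ℝ),
        |(transfer0 (fun z => z + z + (((1 : ℝ) / (5 * (n : ℝ)) : ℝ) : AddCircle (1 : ℝ))) φ x -
            transfer0 (fun z => z + z) φ x) -
          (transfer0 (fun z => z + z + (((1 : ℝ) / (5 * (n : ℝ)) : ℝ) : AddCircle (1 : ℝ))) φ y -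
            transfer0 (fun z => z + z) φ y)| ≤ K' * dist x y) →
      1 ≤ K' := by
  intro n hn K' hK
  rw [show (1 : ℝ) / (5 * n) = 2 * (1 / (10 * n)) by field_simp; ring] at hK
  set t : ℝ := 1 / (10 * n)
  have ht₀ : 0 < t := by positivity
  have ht₁ : t ≤ 1 / 10 := by
    have : (1 : ℝ) ≤ n := by exact_mod_cast hn
    rw [div_le_div_iff₀ (by positivity) (by norm_num)]
    linarith
  have hdist : dist ((0 : ℝ) : UnitAddCircle) t = t := by
    rw [dist_comm, dist_eq_norm, ← AddCircle.coe_sub, sub_zero,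
      UnitAddCircle.norm_coe_eq_abs (abs_le.2 ⟨by linarith, by linarith⟩), abs_of_pos ht₀]
  have key := hK ↑(0 : ℝ) ↑t
  rw [transfer0_shift_sub_transfer0_at_zero hφ1 hφ2 ht₀.le ht₁,
    transfer0_shift_sub_transfer0_at_self hφ1 hφ2 ht₀.le ht₁, hdist, sub_zero, abs_of_pos ht₀] at key
  exact (le_mul_iff_one_le_left ht₀).1 key

/-- Example (discontinuity of the transfer operator on Lipschitz functions): with
`f(x) = 2x` and `f_n(x) = 2(x + 1/(10n))` on `S¹`, for any Lipschitz `φ` with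
`φ(x) = |x|` for `|x| ≤ 1/8` and `φ(x) = 0` for `1/5 ≤ |x| ≤ 1/2`, the Lipschitz
seminorm of `𝓛_{f_n} φ - 𝓛_f φ` is at least `1` for every `n ≥ 1`; in particular
`𝓛_{f_n}` does not converge to `𝓛_f` in the strong operator topology on Lipschitz
functions, although `f_n → f` smoothly. -/
theorem transfer_operator_not_continuous
    (φ : AddCircle (1 : ℝ) → ℝ) (K : NNReal) (hφLip : LipschitzWith K φ)
    (hφ1 : ∀ x : AddCircle (1 : ℝ), ‖x‖ ≤ 1 / 8 → φ x = ‖x‖)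
    (hφ2 : ∀ x : AddCircle (1 : ℝ), 1 / 5 ≤ ‖x‖ → φ x = 0) :
    ∀ n : ℕ, 1 ≤ n → ∀ K' : ℝ,
      (∀ x y : AddCircle (1 : ℝ),
        |(transfer0 (fun z => z + z + (((1 : ℝ) / (5 * (n : ℝ)) : ℝ) : AddCircle (1 : ℝ))) φ x -
            transfer0 (fun z => z + z) φ x) -
          (transfer0 (fun z => z + z + (((1 : ℝ) / (5 * (n : ℝ)) : ℝ) : AddCircle (1 : ℝ))) φ y -
            transfer0 (fun z => z + z) φ y)| ≤ K' * dist x y) →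
      1 ≤ K' :=
  transfer_operator_not_continuous_general φ hφ1 hφ2
end
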